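/- arXiv:math/0404137 — 7 statements merged into one kernel-verified Lean document; each statement's English description precedes it below -/
import Mathlib

section
/- Let g, h : ℤ → G be maps to an additive abelian group with positive periods m and n respectively. If g(r) = h(r) for all integers r with 0 ≤ r < m + n − gcd(m,n), then g = h. -/
section FineWilf

variable {G : Type*} [AddCommGroup G]

/-- A periodic function is determined by its values on `[0, p)` via `%`. -/
private lemma fw_mod (f : ℤ → G) (p : ℤ) (hp : 0 < p) (hf : ∀ x, f (x + p) = f x)
    (x : ℤ) : f x = f (x % p) := by
  have hper : Function.Periodic f p := hf
  have := (hper.int_mul (x / p)) (x % p)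
  calc f x = f (x % p + ↑(x / p) * p) := by rw [add_comm, mul_comm, Int.mul_ediv_add_emod]
    _ = f (x % p) := this

private lemma fw_key : ∀ N m n : ℕ, m + n ≤ N → 0 < m → 0 < n →
    ∀ g h : ℤ → G, (∀ x, g (x + m) = g x) → (∀ x, h (x + n) = h x) →
    (∀ x : ℤ, 0 ≤ x → x < (m : ℤ) + n - Nat.gcd m n → g x = h x) → g = h := by
  intro N
  induction N with
  | zero => intro m n hmn hm hn; omega
  | succ N ih =>
    intro m n hmn hm hn g h hg hh heq
    -- an auxiliary step handling the case m < n (to be used symmetrically)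
    have step : ∀ m n : ℕ, m + n ≤ N + 1 → 0 < m → m < n →
        ∀ g h : ℤ → G, (∀ x, g (x + m) = g x) → (∀ x, h (x + n) = h x) →
        (∀ x : ℤ, 0 ≤ x → x < (m : ℤ) + n - Nat.gcd m n → g x = h x) → g = h := by
      clear hmn hm hn hg hh heq g h m n
      intro m n hmn hm hlt g h hg hh heq
      set d : ℕ := Nat.gcd m n with hd
      have hdn : d ∣ n := Nat.gcd_dvd_right m n
      have hdm : d ∣ m := Nat.gcd_dvd_left m n
      have hdpos : 0 < d := Nat.gcd_pos_of_pos_left n hm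
      have hdlem : d ≤ m := Nat.le_of_dvd hm hdm
      set n' : ℕ := n - m with hn'
      have hn'pos : 0 < n' := by omega
      have hdn' : Nat.gcd m n' = d := by
        rw [hn', Nat.gcd_sub_self_right (le_of_lt hlt)]
      have hdlen' : d ≤ n' := Nat.le_of_dvd hn'pos (hdn' ▸ Nat.gcd_dvd_right m n')
      -- h has period m on the initial window
      have hCm : ∀ j : ℤ, 0 ≤ j → j < (n : ℤ) - d → h (j + m) = h j := by
        intro j hj0 hj1
        have h1 : g (j + m) = h (j + m) := heq _ (by positivity) (by push_cast; omega)
        have h2 : g j = h j := heq j hj0 (by push_cast; omega)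
        rw [← h1, hg, h2]
      set h1 : ℤ → G := fun x => h (x + m) with hh1def
      set k : ℤ → G := fun x => h1 (x % n') with hkdef
      have hk : ∀ x, k (x + n') = k x := by
        intro x; simp only [hkdef]
        congr 1
        have := Int.add_mul_emod_self_left x (n' : ℤ) 1
        simpa using this
      -- h1 agrees with its n'-periodization on the window [0, m + n' - d)
      have hE : ∀ t : ℕ, ∀ x : ℤ, 0 ≤ x → x < (m : ℤ) + n' - d → x < t →
          h1 x = h1 (x % n') := by
        intro t
        induction t with
        | zero => intro x hx0 _ hxt; omega
        | succ t iht =>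
          intro x hx0 hx1 hxt
          by_cases hcase : x < (n' : ℤ)
          · rw [Int.emod_eq_of_lt hx0 hcase]
          · push_neg at hcase
            have hstep : h1 x = h1 (x - n') := by
              have e1 : h1 x = h (x - n') := by
                have := hh (x + m - n)
                simp only [hh1def]
                have : x + m - n + n = x + m := by ring
                calc h (x + m) = h (x + m - n + n) := by rw [this]
                  _ = h (x + m - n) := hh _
                  _ = h (x - n') := by congr 1; push_cast [hn']; omega
              have e2 : h1 (x - n') = h (x - n') := by
                simp only [hh1def]
                exact hCm (x - n') (by omega) (by push_cast [hn'] at hx1 ⊢; omega)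
              rw [e1, ← e2]
            rw [hstep, iht (x - n') (by omega) (by omega) (by omega)]
            congr 1
            have := Int.add_mul_emod_self_left (x - n') (n' : ℤ) 1
            have h2 : x - n' + n' * 1 = x := by ring
            rw [h2] at this
            exact this.symm
      -- agreement of g and k on [0, m + n' - d)
      have hagr : ∀ x : ℤ, 0 ≤ x → x < (m : ℤ) + n' - Nat.gcd m n' → g x = k x := by
        intro x hx0 hx1
        rw [hdn'] at hx1
        have hg1 : g x = h1 x := by
          have : g x = g (x + m) := (hg x).symm
          rw [this, hh1def]
          exact heq (x + m) (by omega) (by push_cast [hn'] at hx1 ⊢; omega)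
        rw [hg1, hkdef]
        exact hE (x.toNat + 1) x hx0 hx1 (by omega)
      -- apply induction hypothesis to the pair (g, k) with periods (m, n')
      have hgk : g = k := ih m n' (by omega) hm hn'pos g k hg hk hagr
      -- hence g has periods m and n', so period d by Bezout
      have hgn' : ∀ x, g (x + (n' : ℤ)) = g x := by rw [hgk]; exact hk
      have hgd : ∀ x, g (x + (d : ℤ)) = g x := by
        have hpm : Function.Periodic g (m : ℤ) := hg
        have hpn : Function.Periodic g (n' : ℤ) := hgn'
        have hbez : (d : ℤ) = (m : ℤ) * Int.gcdA m n' + (n' : ℤ) * Int.gcdB m n' := by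
          have := Int.gcd_eq_gcd_ab (m : ℤ) (n' : ℤ)
          rw [Int.gcd_natCast_natCast, hdn'] at this
          exact this
        have p1 : Function.Periodic g ((Int.gcdA m n' : ℤ) * (m : ℤ)) :=
          hpm.int_mul _
        have p2 : Function.Periodic g ((Int.gcdB m n' : ℤ) * (n' : ℤ)) :=
          hpn.int_mul _
        have := p1.add_period p2
        intro x
        have e : (d : ℤ) = (Int.gcdA m n' : ℤ) * (m : ℤ) + (Int.gcdB m n' : ℤ) * (n' : ℤ) := by
          rw [hbez]; ring
        rw [e]; exact this x
      -- g has period n (since d ∣ n)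
      have hgn : ∀ x, g (x + (n : ℤ)) = g x := by
        obtain ⟨c, hc⟩ := hdn
        have hpd : Function.Periodic g (d : ℤ) := hgd
        have := hpd.int_mul (c : ℤ)
        intro x
        have e : (n : ℤ) = (c : ℤ) * (d : ℤ) := by push_cast [hc]; ring
        rw [e]; exact this x
      -- conclude g = h by reducing mod n
      funext x
      rw [fw_mod g n (by exact_mod_cast hn'pos.trans_le (by omega)) hgn x,
          fw_mod h n (by exact_mod_cast hm.trans hlt) hh x]
      have hx0 : 0 ≤ x % (n : ℤ) := Int.emod_nonneg x (Int.natCast_ne_zero.mpr (by omega))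
      have hx1 : x % (n : ℤ) < (n : ℤ) := Int.emod_lt_of_pos x (by exact_mod_cast hm.trans hlt)
      exact heq _ hx0 (by push_cast; omega)
    -- main case split
    rcases lt_trichotomy m n with hlt | heqmn | hgt
    · exact step m n hmn hm hlt g h hg hh heq
    · -- m = n
      subst heqmn
      funext x
      rw [fw_mod g m (by exact_mod_cast hm) hg x, fw_mod h m (by exact_mod_cast hm) hh x]
      have hx0 : 0 ≤ x % (m : ℤ) := Int.emod_nonneg x (Int.natCast_ne_zero.mpr (by omega))
      have hx1 : x % (m : ℤ) < (m : ℤ) := Int.emod_lt_of_pos x (by exact_mod_cast hm)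
      refine heq _ hx0 ?_
      have : Nat.gcd m m = m := Nat.gcd_self m
      push_cast [this]; omega
    · have := step n m (by omega) hn hgt h g hh hg (by
        intro x hx0 hx1
        refine (heq x hx0 ?_).symm
        rw [Nat.gcd_comm] at hx1
        push_cast at hx1 ⊢
        omega)
      exact this.symm

end FineWilf

theorem stmt_6 {G : Type*} [AddCommGroup G] (m n : ℕ) (hm : 0 < m) (hn : 0 < n)
    (g h : ℤ → G) (hg : ∀ x, g (x + m) = g x) (hh : ∀ x, h (x + n) = h x)
    (heq : ∀ r : ℕ, r < m + n - Nat.gcd m n → g r = h r) :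
    g = h := by
  refine fw_key (m + n) m n le_rfl hm hn g h hg hh ?_
  intro x hx0 hx1
  have hdm : Nat.gcd m n ≤ m := Nat.le_of_dvd hm (Nat.gcd_dvd_left m n)
  have hx : x = (x.toNat : ℤ) := (Int.toNat_of_nonneg hx0).symm
  rw [hx]
  refine heq x.toNat ?_
  push_cast at hx1
  omega
end

section
/- Let g, h : ℤ → G be maps to an additive abelian group with positive periods m and n. Then for every x ∈ ℤ, g(x) − h(x) lies in the subgroup of G generated by {g(r) − h(r) : 0 ≤ r < m + n − gcd(m,n)}. -/
/-!
Passing to the quotient by the subgroup, it suffices to show that an `m`-periodic `u` and an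
`n`-periodic `v` which agree on `[0, m + n - d)`, `d = gcd m n`, agree everywhere (a Fine–Wilf
type statement). The difference `D x = (u - v) (x + m) - (u - v) x = v x - v (x + m)` is
`n`-periodic and vanishes on `[0, n - d)`. As `d ∣ m`, the sums of `D` along the progressions
`t, t + d, …, t + n - d` vanish, so `D` also vanishes on `[n - d, n)`, hence everywhere. Thus
`u - v` is `m`-periodic and vanishes on `[0, m)`, so it is zero.
-/

open Function Finset

theorem Function.Periodic.eq_zero_of_forall_mem_Ico {α β : Type*} [AddCommGroup α] [LinearOrder α]
    [IsOrderedAddMonoid α] [Archimedean α] [Zero β] {f : α → β} {c : α} (hf : Periodic f c)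
    (hc : 0 < c) (h : ∀ x ∈ Set.Ico 0 c, f x = 0) : f = 0 := by
  funext x
  obtain ⟨y, hy, hxy⟩ := hf.exists_mem_Ico₀ hc x
  rw [hxy, h y hy, Pi.zero_apply]

theorem Function.Periodic.periodic_sum_range_add_mul {M : Type*} [AddCommGroup M] {w : ℤ → M}
    {N : ℕ} {d : ℤ} (hw : Periodic w (N * d)) :
    Periodic (fun t => ∑ k ∈ range N, w (t + k * d)) d := by
  intro t
  have hshift := sum_range_succ' (fun k : ℕ => w (t + k * d)) N
  rw [sum_range_succ, hw t] at hshift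
  simp only [Nat.cast_add, Nat.cast_one, add_mul, one_mul, Nat.cast_zero, zero_mul, add_zero]
    at hshift
  simpa only [add_assoc, add_comm (d : ℤ)] using add_right_cancel hshift.symm

theorem forall_mem_Ico_eq_zero_of_sum_range_eq_zero {A : Type*} [AddCommGroup A] {D : ℤ → A}
    {N : ℕ} {d : ℤ} (hsum : ∀ t, ∑ k ∈ range (N + 1), D (t + k * d) = 0)
    (h0 : ∀ x ∈ Set.Ico 0 (N * d), D x = 0) : ∀ x ∈ Set.Ico 0 ((N + 1) * d), D x = 0 := by
  rintro x ⟨hx0, hx⟩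
  rcases lt_or_ge x (N * d) with hlt | hge
  · exact h0 x ⟨hx0, hlt⟩
  have hd : 0 ≤ d := by nlinarith
  have hterms : ∀ k ∈ range N, D (x - N * d + k * d) = 0 := by
    intro k hk
    have hk : (k : ℤ) + 1 ≤ N := by exact_mod_cast mem_range.mp hk
    exact h0 _ ⟨by positivity, by nlinarith⟩
  have := hsum (x - N * d)
  rwa [sum_range_succ, sum_eq_zero hterms, zero_add, sub_add_cancel] at this

theorem Function.Periodic.eq_of_eqOn_Ico_add_sub_gcd {A : Type*} [AddCommGroup A] {u v : ℤ → A}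
    {m n : ℕ} (hm : 0 < m) (hn : 0 < n) (hu : Periodic u m) (hv : Periodic v n)
    (huv : ∀ x ∈ Set.Ico (0 : ℤ) (m + n - m.gcd n), u x = v x) : u = v := by
  set d := m.gcd n
  obtain ⟨M, hM⟩ : ∃ M : ℕ, (m : ℤ) = M * d :=
    ⟨m / d, by exact_mod_cast (Nat.div_mul_cancel (Nat.gcd_dvd_left m n)).symm⟩
  obtain ⟨N, hN⟩ : ∃ N : ℕ, (n : ℤ) = (N + 1) * d := by
    obtain ⟨k, hk⟩ := Nat.gcd_dvd_right m n
    obtain ⟨N, rfl⟩ := Nat.exists_eq_add_one_of_ne_zero (by rintro rfl; omega : k ≠ 0)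
    exact ⟨N, by rw [hk]; push_cast; ring⟩
  have hd : (d : ℤ) ≤ n := by exact_mod_cast Nat.gcd_le_right m hn
  set F := u - v
  set D := fun x => F (x + m) - F x
  have hD : D = v - fun x => v (x + m) := by
    funext x
    simp only [D, F, Pi.sub_apply, hu x]
    abel
  have hsum : ∀ t, ∑ k ∈ range (N + 1), D (t + k * d) = 0 := by
    intro t
    have hS := (Periodic.periodic_sum_range_add_mul
      (hN ▸ hv : Periodic v ((N + 1 : ℕ) * d))).nat_mul M t
    simp only [hD, Pi.sub_apply, sum_sub_distrib, sub_eq_zero]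
    simpa only [← hM, add_right_comm t] using hS.symm
  have hDwin : ∀ x ∈ Set.Ico 0 (N * (d : ℤ)), D x = 0 := by
    rintro x ⟨hx0, hx⟩
    simp only [D, F, Pi.sub_apply, huv x ⟨hx0, by linarith⟩, huv (x + m) ⟨by omega, by linarith⟩,
      sub_self]
  have hD0 : D = 0 := by
    refine (hD ▸ hv.sub (hv.add_const m)).eq_zero_of_forall_mem_Ico (by positivity) ?_
    rw [hN]
    exact forall_mem_Ico_eq_zero_of_sum_range_eq_zero hsum hDwin
  have hF0 : F = 0 := by
    refine Periodic.eq_zero_of_forall_mem_Ico (fun x => sub_eq_zero.mp (congrFun hD0 x))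
      (by positivity) ?_
    rintro x ⟨hx0, hx⟩
    exact sub_eq_zero.mpr (huv x ⟨hx0, by linarith⟩)
  exact sub_eq_zero.mp hF0

theorem stmt_7 {G : Type*} [AddCommGroup G] (m n : ℕ) (hm : 0 < m) (hn : 0 < n)
    (g h : ℤ → G) (hg : ∀ x, g (x + m) = g x) (hh : ∀ x, h (x + n) = h x) :
    ∀ x : ℤ, g x - h x ∈
      AddSubgroup.closure {d : G | ∃ r : ℕ, r < m + n - Nat.gcd m n ∧ d = g r - h r} := by
  set C := AddSubgroup.closure {d : G | ∃ r : ℕ, r < m + n - Nat.gcd m n ∧ d = g r - h r}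
  let π := QuotientAddGroup.mk' C
  have hmem : ∀ x, (π ∘ g) x = (π ∘ h) x ↔ g x - h x ∈ C := fun x => by
    rw [comp_apply, comp_apply, ← sub_eq_zero, ← map_sub, QuotientAddGroup.mk'_apply,
      QuotientAddGroup.eq_zero_iff]
  have hwin : ∀ x ∈ Set.Ico (0 : ℤ) (m + n - m.gcd n), (π ∘ g) x = (π ∘ h) x := by
    rintro x ⟨hx0, hx⟩
    lift x to ℕ using hx0
    have hr : x < m + n - m.gcd n := by have := Nat.gcd_le_left n hm; omega
    exact (hmem x).2 (AddSubgroup.subset_closure ⟨x, hr, rfl⟩)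
  intro x
  exact (hmem x).1 <| congrFun
    (Periodic.eq_of_eqOn_Ico_add_sub_gcd hm hn (Periodic.comp hg π) (Periodic.comp hh π) hwin) x
end

section
/- (Fine–Wilf) Let {α_j}_{j≥0} and {β_j}_{j≥0} be real sequences with periods m and n respectively (α_{j+m} = α_j and β_{j+n} = β_j for all j ≥ 0). If α_j = β_j for all 0 ≤ j < m + n − gcd(m,n), then α_j = β_j for all j ≥ 0. -/
/-- `f` has period `p` on the prefix of length `L`. -/
def PerOn (f : ℕ → ℝ) (p L : ℕ) : Prop := ∀ j, j + p < L → f (j + p) = f j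

lemma chainL {f : ℕ → ℝ} {p L : ℕ} (h : PerOn f p L) :
    ∀ t k, k + t * p < L → f (k + t * p) = f k := by
  intro t
  induction t with
  | zero => simp
  | succ t ih =>
    intro k hk
    have h1 : k + (t + 1) * p = (k + t * p) + p := by ring
    rw [h1] at hk ⊢
    rw [h (k + t * p) hk]
    exact ih k (lt_of_le_of_lt (Nat.le_add_right _ p) hk)

lemma gchain {f : ℕ → ℝ} {p : ℕ} (h : ∀ j, f (j + p) = f j) :
    ∀ t k, f (k + t * p) = f k := by
  intro t
  induction t with
  | zero => simp
  | succ t ih =>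
    intro k
    have h1 : k + (t + 1) * p = (k + t * p) + p := by ring
    rw [h1, h (k + t * p)]
    exact ih k

lemma gmod {f : ℕ → ℝ} {p : ℕ} (h : ∀ j, f (j + p) = f j) (j : ℕ) :
    f j = f (j % p) := by
  conv_lhs => rw [← Nat.mod_add_div j p, Nat.mul_comm]
  exact gchain h _ _

/-- Key inductive step of Fine–Wilf. -/
lemma fw_key_s8 (m n d : ℕ) (hm : 0 < m) (hmn : m < n) (hd : 0 < d)
    (hdm : d ∣ m) (hdn : d ∣ n) (f : ℕ → ℝ)
    (h1 : PerOn f m (m + n - d)) (h2 : PerOn f n (m + n - d))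
    (ihp : PerOn f m (m + (n - m) - d) → PerOn f (n - m) (m + (n - m) - d) →
      PerOn f d (m + (n - m) - d)) :
    PerOn f d (m + n - d) := by
  have hdm' : d ≤ m := Nat.le_of_dvd hm hdm
  have hdnm : d ∣ (n - m) := Nat.dvd_sub hdn hdm
  have hdnm' : d ≤ n - m := Nat.le_of_dvd (by omega) hdnm
  -- periods m and n-m on the shorter prefix
  have p1 : PerOn f m (m + (n - m) - d) := fun j hj => h1 j (by omega)
  have p2 : PerOn f (n - m) (m + (n - m) - d) := by
    intro j hj
    have e1 : j + (n - m) + m = j + n := by omega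
    have h2' := h2 j (by omega)
    have h1' := h1 (j + (n - m)) (by omega)
    rw [e1] at h1'
    rw [← h1', h2']
  have hd' := ihp p1 p2
  intro j hj
  by_cases hc : j + d < m + (n - m) - d
  · exact hd' j hc
  · push_neg at hc
    by_cases hjm : m ≤ j
    · obtain ⟨k, rfl⟩ := Nat.exists_eq_add_of_le hjm
      have e1 : m + k + d = (k + d) + m := by omega
      have e2 : m + k = k + m := by omega
      rw [e1, e2]
      rw [h1 (k + d) (by omega), h1 k (by omega)]
      exact hd' k (by omega)
    · push_neg at hjm
      -- forced: n - m = d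
      have hnm : n - m = d := by
        obtain ⟨c, hc'⟩ := hdnm
        rcases c with _ | _ | c
        · omega
        · omega
        · exfalso
          have : 2 * d ≤ d * (c + 1 + 1) := by nlinarith
          omega
      have hmj : m ≤ j + d := by omega
      obtain ⟨r, hr⟩ := Nat.exists_eq_add_of_le hmj
      have hrd : r < d := by omega
      have e1 : j + d = r + m := by omega
      rw [e1, h1 r (by omega)]
      obtain ⟨t, ht⟩ : d ∣ (m - d) := Nat.dvd_sub hdm dvd_rfl
      rw [Nat.mul_comm] at ht
      have e2 : j = r + t * d := by omega
      rw [e2]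
      exact (chainL hd' t r (by omega)).symm

/-- Fine–Wilf on a prefix, by strong induction on `m + n`. -/
lemma fw : ∀ N m n, 0 < m → 0 < n → m + n ≤ N → ∀ f : ℕ → ℝ,
    PerOn f m (m + n - Nat.gcd m n) → PerOn f n (m + n - Nat.gcd m n) →
    PerOn f (Nat.gcd m n) (m + n - Nat.gcd m n) := by
  intro N
  induction N with
  | zero => intro m n hm hn hmn; omega
  | succ N ih =>
    intro m n hm hn hmn f h1 h2
    rcases lt_trichotomy m n with hlt | heq | hgt
    · have hg : Nat.gcd m (n - m) = Nat.gcd m n := Nat.gcd_sub_self_right hlt.le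
      refine fw_key_s8 m n (Nat.gcd m n) hm hlt (Nat.gcd_pos_of_pos_left n hm)
        (Nat.gcd_dvd_left m n) (Nat.gcd_dvd_right m n) f h1 h2 ?_
      intro q1 q2
      have := ih m (n - m) hm (by omega) (by omega) f (by rwa [hg]) (by rwa [hg])
      rwa [hg] at this
    · subst heq
      intro j hj
      rw [Nat.gcd_self] at hj
      omega
    · have hcomm : n + m - Nat.gcd m n = m + n - Nat.gcd m n := by
        omega
      have hg : Nat.gcd n (m - n) = Nat.gcd m n := by
        rw [Nat.gcd_sub_self_right hgt.le, Nat.gcd_comm]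
      have key := fw_key_s8 n m (Nat.gcd m n) hn hgt (Nat.gcd_pos_of_pos_left n hm)
        ((Nat.gcd_comm m n) ▸ Nat.gcd_dvd_left n m)
        ((Nat.gcd_comm m n) ▸ Nat.gcd_dvd_right n m) f
        (by rwa [hcomm]) (by rwa [hcomm]) ?_
      · rwa [hcomm] at key
      · intro q1 q2
        have := ih n (m - n) hn (by omega) (by omega) f (by rwa [hg]) (by rwa [hg])
        rwa [hg] at this

theorem stmt_8 (m n : ℕ) (hm : 0 < m) (hn : 0 < n) (α β : ℕ → ℝ)
    (hα : ∀ j, α (j + m) = α j) (hβ : ∀ j, β (j + n) = β j)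
    (h : ∀ j, j < m + n - Nat.gcd m n → α j = β j) :
    ∀ j, α j = β j := by
  set d := Nat.gcd m n with hd
  have hdm : d ∣ m := Nat.gcd_dvd_left m n
  have hdn : d ∣ n := Nat.gcd_dvd_right m n
  have hdpos : 0 < d := Nat.gcd_pos_of_pos_left n hm
  have hdm' : d ≤ m := Nat.le_of_dvd hm hdm
  have hdn' : d ≤ n := Nat.le_of_dvd hn hdn
  by_cases hnd : d = n
  · -- n ∣ m : trivial case
    have hnm : n ∣ m := hnd ▸ hdm
    have hL : m + n - d = m := by omega
    intro j
    rw [gmod hα j, gmod hβ j, h (j % m) (by rw [hL]; exact Nat.mod_lt j hm),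
      gmod hβ (j % m), Nat.mod_mod_of_dvd j hnm]
  · -- d < n, so 2*d ≤ n
    have h2d : 2 * d ≤ n := by
      obtain ⟨c, hc⟩ := hdn
      rcases c with _ | _ | c
      · omega
      · omega
      · nlinarith
    have hαn : PerOn α n (m + n - d) := by
      intro j hj
      rw [h (j + n) hj, hβ j, ← h j (by omega)]
    have hαm : PerOn α m (m + n - d) := fun j _ => hα j
    have hper := fw (m + n) m n hm hn le_rfl α hαm hαn
    -- α has period d globally
    have hαd : ∀ j, α (j + d) = α j := by
      intro j
      have e1 : j + d = j % m + d + m * (j / m) := by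
        conv_lhs => rw [← Nat.mod_add_div j m]
        omega
      rw [e1, Nat.mul_comm, gchain hα _ _, gmod hα j]
      exact hper (j % m) (by have := Nat.mod_lt j hm; omega)
    intro j
    rw [gmod hβ j, gmod hαd j]
    have e2 : j % d = j % n % d := (Nat.mod_mod_of_dvd j hdn).symm
    rw [e2, ← gmod hαd (j % n)]
    exact h (j % n) (by have := Nat.mod_lt j hn; omega)
end

section
/- Let ψ₁,…,ψ_k : ℤ → ℂ have periods n₁,…,n_k ∈ ℤ⁺, ψ = ψ₁ + ⋯ + ψ_k, and L = ∑_{∅ ≠ I ⊆ {1,…,k}} (−1)^{|I|−1} gcd(n_s : s ∈ I). If ψ(n) = 0 for all 0 ≤ n < L, then ψ(n) = 0 for all n ∈ ℤ. -/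
/-!
Let `A` be the set of all `n_s`-th roots of unity and `Q = ∏_{z ∈ A} (X - z)`. Each
`X ^ n_s - 1` divides `Q`, and `X ^ n_s - 1` applied to the shift operator kills the
`n_s`-periodic `ψ_s`, so `Q(shift)` kills `ψ`: the values of `ψ` satisfy a linear recurrence of
order `deg Q = |A|` whose extreme coefficients are nonzero (`0 ∉ A`). Such a recurrence can be
run both forwards and backwards, so `|A|` consecutive zeros force `ψ = 0`. Finally `|A| = L` by
inclusion–exclusion, since the common roots of `X ^ n_s - 1`, `s ∈ I`, are the
`gcd(n_s : s ∈ I)`-th roots of unity.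
-/

open Polynomial Finset

section IntShift

variable (R M : Type*) [CommRing R] [AddCommGroup M] [Module R M]

noncomputable def intShift : Module.End R (ℤ → M) :=
  LinearMap.funLeft R M (· + 1)

variable {R M}

lemma intShift_apply (f : ℤ → M) (x : ℤ) : intShift R M f x = f (x + 1) := rfl

lemma intShift_pow_apply (m : ℕ) (f : ℤ → M) (x : ℤ) :
    (intShift R M ^ m) f x = f (x + m) := by
  induction m generalizing x with
  | zero => simp
  | succ m ih =>
    rw [pow_succ', Module.End.mul_apply, intShift_apply, ih]
    congr 1
    push_cast
    ring

lemma aeval_intShift_apply (P : R[X]) (f : ℤ → M) (x : ℤ) :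
    aeval (intShift R M) P f x = ∑ i ∈ range (P.natDegree + 1), P.coeff i • f (x + i) := by
  simp [aeval_eq_sum_range, intShift_pow_apply]

lemma aeval_intShift_eq_zero_of_periodic_of_dvd {n : ℕ} {f : ℤ → M}
    (hf : Function.Periodic f (n : ℤ)) {P : R[X]} (hP : X ^ n - 1 ∣ P) :
    aeval (intShift R M) P f = 0 := by
  obtain ⟨Q, rfl⟩ := hP
  have hker : aeval (intShift R M) (X ^ n - 1 : R[X]) f = 0 := by
    funext x
    simp [intShift_pow_apply, hf x]
  rw [mul_comm, map_mul, Module.End.mul_apply, hker, map_zero]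

variable [IsDomain R] [Module.IsTorsionFree R M] {P : R[X]} {f : ℤ → M}

lemma apply_add_natDegree_eq_zero_of_aeval_intShift (hP : P ≠ 0)
    (hPf : aeval (intShift R M) P f = 0) {a : ℤ}
    (hwin : ∀ i < P.natDegree, f (a + i) = 0) : f (a + P.natDegree) = 0 := by
  have h := congrFun hPf a
  rw [aeval_intShift_apply, sum_range_succ,
    sum_eq_zero fun i hi => by rw [hwin i (mem_range.1 hi), smul_zero], zero_add] at h
  rwa [Pi.zero_apply, coeff_natDegree, smul_eq_zero_iff_right (leadingCoeff_ne_zero.2 hP)] at h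

lemma apply_eq_zero_of_aeval_intShift_of_coeff_zero_ne_zero (hP0 : P.coeff 0 ≠ 0)
    (hPf : aeval (intShift R M) P f = 0) {a : ℤ}
    (hwin : ∀ i < P.natDegree, f (a + 1 + i) = 0) : f a = 0 := by
  have h := congrFun hPf a
  rw [aeval_intShift_apply, sum_range_succ', sum_eq_zero fun i hi => ?_, zero_add] at h
  · simpa [smul_eq_zero_iff_right hP0] using h
  · rw [show a + ↑(i + 1) = a + 1 + i by push_cast; ring, hwin i (mem_range.1 hi), smul_zero]

theorem eq_zero_of_aeval_intShift_eq_zero (hP0 : P.coeff 0 ≠ 0)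
    (hPf : aeval (intShift R M) P f = 0)
    (hinit : ∀ x : ℤ, 0 ≤ x → x < P.natDegree → f x = 0) : f = 0 := by
  have hP : P ≠ 0 := fun h => hP0 (by simp [h])
  let Window (a : ℤ) : Prop := ∀ i < P.natDegree, f (a + i) = 0
  have up (a : ℤ) (ha : Window a) : Window (a + 1) := by
    intro i hi
    rcases (Nat.succ_le_of_lt hi).lt_or_eq with hlt | heq
    · rw [← ha (i + 1) hlt]; push_cast; ring_nf
    · rw [← apply_add_natDegree_eq_zero_of_aeval_intShift hP hPf ha, ← heq]; push_cast; ring_nf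
  have down (a : ℤ) (ha : Window (a + 1)) : Window a := by
    rintro (_ | i) hi
    · simpa using apply_eq_zero_of_aeval_intShift_of_coeff_zero_ne_zero hP0 hPf ha
    · rw [← ha i (by omega)]; push_cast; ring_nf
  have hall (a : ℤ) : Window a := by
    induction a using Int.induction_on with
    | zero => exact fun i hi => by simpa using hinit i (by positivity) (by simpa using hi)
    | succ i ih => exact up _ ih
    | pred i ih => exact down _ (by simpa using ih)
  funext x
  simpa using apply_add_natDegree_eq_zero_of_aeval_intShift hP hPf (hall (x - P.natDegree))

end IntShift

lemma pow_finset_gcd_eq_one_iff {G ι : Type*} [Monoid G] (s : Finset ι) (n : ι → ℕ) (a : G) :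
    a ^ s.gcd n = 1 ↔ ∀ i ∈ s, a ^ n i = 1 := by
  simp only [← orderOf_dvd_iff_pow_eq_one, Finset.dvd_gcd_iff]

lemma inf'_nthRootsFinset_one {R ι : Type*} [CommRing R] [IsDomain R] [DecidableEq R]
    {s : Finset ι} (hs : s.Nonempty) {n : ι → ℕ} (hn : ∀ i ∈ s, 0 < n i) :
    s.inf' hs (fun i => nthRootsFinset (n i) (1 : R)) = nthRootsFinset (s.gcd n) 1 := by
  have hg : 0 < s.gcd n := by
    obtain ⟨j, hj⟩ := hs
    exact Nat.pos_of_ne_zero fun h => (hn j hj).ne' (gcd_eq_zero_iff.1 h j hj)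
  ext z
  rw [mem_inf']
  simp +contextual [mem_nthRootsFinset, hn, hg, pow_finset_gcd_eq_one_iff]

lemma card_biUnion_nthRootsFinset_one {ι : Type*} (s : Finset ι) (n : ι → ℕ)
    (hn : ∀ i ∈ s, 0 < n i) :
    (#(s.biUnion fun i => nthRootsFinset (n i) (1 : ℂ)) : ℤ) =
      ∑ I ∈ s.powerset.filter (fun I => I.Nonempty),
        (-1 : ℤ) ^ (#I - 1) * ((I.gcd n : ℕ) : ℤ) := by
  rw [inclusion_exclusion_card_biUnion, ← sum_attach (s.powerset.filter (fun I => I.Nonempty))]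
  refine sum_congr rfl ?_
  rintro ⟨I, hI⟩ -
  obtain ⟨hIs, ⟨j, hj⟩⟩ := mem_filter.1 hI
  have hn' : ∀ i ∈ I, 0 < n i := fun i hi => hn i (mem_powerset.1 hIs hi)
  have hg : I.gcd n ≠ 0 := fun h => (hn' j hj).ne' (gcd_eq_zero_iff.1 h j hj)
  obtain ⟨m, hm⟩ : ∃ m, #I = m + 1 := Nat.exists_eq_succ_of_ne_zero (card_ne_zero_of_mem hj)
  rw [inf'_nthRootsFinset_one _ hn', (Complex.isPrimitiveRoot_exp _ hg).card_nthRootsFinset, hm]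
  simp [pow_succ]

lemma X_pow_sub_one_dvd_prod_X_sub_C {R : Type*} [CommRing R] [IsDomain R] {n : ℕ} (hn : 0 < n)
    {ζ : R} (hζ : IsPrimitiveRoot ζ n) {A : Finset R} (hA : nthRootsFinset n (1 : R) ⊆ A) :
    X ^ n - 1 ∣ ∏ z ∈ A, (X - C z) := by
  rw [X_pow_sub_one_eq_prod hn hζ]
  exact prod_dvd_prod_of_subset _ _ _ hA

theorem stmt_9 (k : ℕ) (n : Fin k → ℕ) (hn : ∀ s, 0 < n s)
    (ψ : Fin k → ℤ → ℂ) (hper : ∀ s x, ψ s (x + n s) = ψ s x)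
    (L : ℤ)
    (hL : L = ∑ I ∈ (Finset.univ : Finset (Fin k)).powerset.filter
        (fun I => I.Nonempty), (-1 : ℤ) ^ (I.card - 1) * ((I.gcd n : ℕ) : ℤ))
    (h : ∀ x : ℤ, 0 ≤ x → x < L → ∑ s, ψ s x = 0) :
    ∀ x : ℤ, ∑ s, ψ s x = 0 := by
  set A := univ.biUnion fun s => nthRootsFinset (n s) (1 : ℂ)
  have hQψ : aeval (intShift ℂ ℂ) (∏ z ∈ A, (X - C z)) (∑ s, ψ s) = 0 := by
    rw [map_sum]
    refine sum_eq_zero fun s _ => aeval_intShift_eq_zero_of_periodic_of_dvd (hper s) ?_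
    exact X_pow_sub_one_dvd_prod_X_sub_C (hn s) (Complex.isPrimitiveRoot_exp _ (hn s).ne')
      (subset_biUnion_of_mem (fun s => nthRootsFinset (n s) (1 : ℂ)) (mem_univ s))
  have hQ0 : (∏ z ∈ A, (X - C z)).coeff 0 ≠ 0 := by
    rw [coeff_zero_prod, prod_ne_zero_iff]
    intro z hz
    obtain ⟨s, -, hz⟩ := mem_biUnion.1 hz
    simpa using ne_zero_of_mem_nthRootsFinset one_ne_zero hz
  have hdeg : ((∏ z ∈ A, (X - C z)).natDegree : ℤ) = L := by
    rw [natDegree_finsetProd_X_sub_C_eq_card, hL,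
      card_biUnion_nthRootsFinset_one _ _ fun s _ => hn s]
  intro x
  simpa using congrFun (eq_zero_of_aeval_intShift_eq_zero hQ0 hQψ fun y hy0 hy => by
    simpa using h y hy0 (hdeg ▸ hy)) x
end

section
/- Let ψ₁,…,ψ_k : ℤ → ℂ have periods n₁,…,n_k ∈ ℤ⁺, ψ = ψ₁ + ⋯ + ψ_k, and L = ∑_{∅ ≠ I ⊆ {1,…,k}} (−1)^{|I|−1} gcd(n_s : s ∈ I). If ψ(n) ∈ ℤ for all 0 ≤ n < L, then ψ(n) ∈ ℤ for all n ∈ ℤ. -/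
open Polynomial Finset

/-- The shift operator on `ℤ → ℂ` as a `ℤ`-linear endomorphism. -/
noncomputable def Sh : Module.End ℤ (ℤ → ℂ) where
  toFun f := fun x => f (x + 1)
  map_add' f g := rfl
  map_smul' c f := rfl

lemma Sh_pow (m : ℕ) (f : ℤ → ℂ) (x : ℤ) : ((Sh ^ m) f) x = f (x + m) := by
  induction m generalizing f x with
  | zero => simp
  | succ m ih =>
    rw [pow_succ]
    have : ((Sh ^ m * Sh) f) x = ((Sh ^ m) (Sh f)) x := rfl
    rw [this, ih]
    show f (x + m + 1) = _
    congr 1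
    push_cast
    ring

lemma aeval_Sh_apply (P : Polynomial ℤ) (f : ℤ → ℂ) (x : ℤ) :
    ((Polynomial.aeval Sh P) f) x
      = ∑ j ∈ Finset.range (P.natDegree + 1), (P.coeff j : ℂ) * f (x + j) := by
  rw [Polynomial.aeval_eq_sum_range, LinearMap.sum_apply, Finset.sum_apply]
  refine Finset.sum_congr rfl fun j _ => ?_
  rw [LinearMap.smul_apply, Pi.smul_apply, Sh_pow, zsmul_eq_mul]

lemma aeval_Sh_X_pow_sub_one (m : ℕ) (f : ℤ → ℂ) (hf : ∀ x, f (x + m) = f x) :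
    (Polynomial.aeval Sh (X ^ m - 1 : Polynomial ℤ)) f = 0 := by
  rw [map_sub, map_one, map_pow, Polynomial.aeval_X]
  funext x
  simp only [LinearMap.sub_apply, Pi.sub_apply, Module.End.one_apply, Sh_pow, hf,
    Pi.zero_apply, sub_self]

lemma sum_neg_one_pow_nonempty {α : Type*} [DecidableEq α] (T : Finset α) (hT : T.Nonempty) :
    ∑ I ∈ T.powerset.filter (fun I => I.Nonempty), (-1 : ℤ) ^ (I.card - 1) = 1 := by
  have h0 : ∑ I ∈ T.powerset, (-1 : ℤ) ^ I.card = 0 := by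
    rw [Finset.sum_powerset_neg_one_pow_card, if_neg hT.ne_empty]
  have hsplit := Finset.sum_filter_add_sum_filter_not T.powerset (fun I => I.Nonempty)
      (fun I => (-1 : ℤ) ^ I.card)
  have hnot : T.powerset.filter (fun I => ¬ I.Nonempty) = {∅} := by
    ext I
    simp only [Finset.mem_filter, Finset.mem_powerset, Finset.not_nonempty_iff_eq_empty,
      Finset.mem_singleton]
    constructor
    · rintro ⟨-, hI⟩; exact hI
    · rintro rfl; exact ⟨Finset.empty_subset T, rfl⟩
  rw [hnot, h0] at hsplit
  simp only [Finset.sum_singleton, Finset.card_empty, pow_zero] at hsplit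
  have hneg : ∑ I ∈ T.powerset.filter (fun I => I.Nonempty), (-1 : ℤ) ^ I.card = -1 := by
    omega
  calc ∑ I ∈ T.powerset.filter (fun I => I.Nonempty), (-1 : ℤ) ^ (I.card - 1)
      = ∑ I ∈ T.powerset.filter (fun I => I.Nonempty), (-(-1 : ℤ) ^ I.card) := by
        refine Finset.sum_congr rfl fun I hI => ?_
        have hne : I.Nonempty := (Finset.mem_filter.mp hI).2
        have hc : I.card - 1 + 1 = I.card := Nat.succ_pred_eq_of_pos (Finset.card_pos.mpr hne)
        have : (-1 : ℤ) ^ I.card = (-1) ^ (I.card - 1) * (-1) := by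
          rw [← pow_succ, hc]
        rw [this]; ring
    _ = 1 := by rw [Finset.sum_neg_distrib, hneg]; ring

lemma incl_excl (k : ℕ) (n : Fin k → ℕ) (hn : ∀ s, 0 < n s) :
    ∑ I ∈ (Finset.univ : Finset (Fin k)).powerset.filter (fun I => I.Nonempty),
      (-1 : ℤ) ^ (I.card - 1) * ((I.gcd n : ℕ) : ℤ)
    = ∑ d ∈ Finset.univ.biUnion (fun i => (n i).divisors), ((Nat.totient d : ℕ) : ℤ) := by
  classical
  set D : Finset ℕ := Finset.univ.biUnion (fun i => (n i).divisors) with hD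
  have hdiv : ∀ I : Finset (Fin k), I.Nonempty →
      (I.gcd n).divisors = D.filter (fun d => ∀ i ∈ I, d ∣ n i) := by
    intro I hI
    obtain ⟨i0, hi0⟩ := hI
    have hgcd0 : I.gcd n ≠ 0 := by
      intro hg
      have := (Finset.gcd_eq_zero_iff.mp hg) i0 hi0
      exact (hn i0).ne' this
    ext d
    simp only [Nat.mem_divisors, Finset.mem_filter, hD, Finset.mem_biUnion, Finset.mem_univ,
      true_and]
    constructor
    · rintro ⟨hd, -⟩
      have hall : ∀ i ∈ I, d ∣ n i := fun i hi => hd.trans (Finset.gcd_dvd hi)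
      exact ⟨⟨i0, ⟨hall i0 hi0, (hn i0).ne'⟩⟩, hall⟩
    · rintro ⟨-, hall⟩
      exact ⟨Finset.dvd_gcd hall, hgcd0⟩
  have hterm : ∀ I ∈ (Finset.univ : Finset (Fin k)).powerset.filter (fun I => I.Nonempty),
      (-1 : ℤ) ^ (I.card - 1) * ((I.gcd n : ℕ) : ℤ)
        = ∑ d ∈ D, (if ∀ i ∈ I, d ∣ n i then (-1 : ℤ) ^ (I.card - 1) * (Nat.totient d : ℤ)
            else 0) := by
    intro I hI
    have hne : I.Nonempty := (Finset.mem_filter.mp hI).2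
    have : ((I.gcd n : ℕ) : ℤ) = ∑ d ∈ (I.gcd n).divisors, (Nat.totient d : ℤ) := by
      rw [← Nat.cast_sum]
      exact_mod_cast congrArg (Nat.cast (R := ℤ)) (Nat.sum_totient (I.gcd n)).symm
    rw [this, hdiv I hne, Finset.sum_filter, Finset.mul_sum]
    refine Finset.sum_congr rfl fun d hd => ?_
    split <;> simp
  rw [Finset.sum_congr rfl hterm, Finset.sum_comm]
  refine Finset.sum_congr rfl fun d hd => ?_
  -- inner sum over nonempty subsets I of univ with d ∣ n i for all i ∈ I
  have hTd : (Finset.univ.filter (fun i => d ∣ n i) : Finset (Fin k)).Nonempty := by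
    simp only [hD, Finset.mem_biUnion, Finset.mem_univ, true_and] at hd
    obtain ⟨i, hi⟩ := hd
    exact ⟨i, Finset.mem_filter.mpr ⟨Finset.mem_univ i, (Nat.mem_divisors.mp hi).1⟩⟩
  set T : Finset (Fin k) := Finset.univ.filter (fun i => d ∣ n i) with hT
  have hset : ((Finset.univ : Finset (Fin k)).powerset.filter (fun I => I.Nonempty)).filter
      (fun I => ∀ i ∈ I, d ∣ n i) = T.powerset.filter (fun I => I.Nonempty) := by
    ext I
    simp only [Finset.mem_filter, Finset.mem_powerset, hT]
    constructor
    · rintro ⟨⟨-, hne⟩, hall⟩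
      exact ⟨fun i hi => Finset.mem_filter.mpr ⟨Finset.mem_univ i, hall i hi⟩, hne⟩
    · rintro ⟨hsub, hne⟩
      exact ⟨⟨Finset.subset_univ I, hne⟩, fun i hi => (Finset.mem_filter.mp (hsub hi)).2⟩
  rw [← Finset.sum_filter, hset, ← Finset.sum_mul, sum_neg_one_pow_nonempty T hTd, one_mul]

theorem stmt_10 (k : ℕ) (n : Fin k → ℕ) (hn : ∀ s, 0 < n s)
    (ψ : Fin k → ℤ → ℂ) (hper : ∀ s x, ψ s (x + n s) = ψ s x)
    (L : ℤ)
    (hL : L = ∑ I ∈ (Finset.univ : Finset (Fin k)).powerset.filter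
        (fun I => I.Nonempty), (-1 : ℤ) ^ (I.card - 1) * ((I.gcd n : ℕ) : ℤ))
    (h : ∀ x : ℤ, 0 ≤ x → x < L → ∃ z : ℤ, ∑ s, ψ s x = (z : ℂ)) :
    ∀ x : ℤ, ∃ z : ℤ, ∑ s, ψ s x = (z : ℂ) := by
  classical
  set D : Finset ℕ := Finset.univ.biUnion (fun i => (n i).divisors) with hD
  set Q : Polynomial ℤ := ∏ d ∈ D, Polynomial.cyclotomic d ℤ with hQ
  set ψt : ℤ → ℂ := fun x => ∑ s, ψ s x with hψt
  -- Q annihilates ψt via the shift action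
  have hdvd : ∀ s : Fin k, (X ^ (n s) - 1 : Polynomial ℤ) ∣ Q := by
    intro s
    rw [← Polynomial.prod_cyclotomic_eq_X_pow_sub_one (hn s) ℤ]
    exact Finset.prod_dvd_prod_of_subset _ _ _
      (fun d hd => Finset.mem_biUnion.mpr ⟨s, Finset.mem_univ s, hd⟩)
  have hann : (Polynomial.aeval Sh Q) ψt = 0 := by
    have hψtsum : ψt = ∑ s, ψ s := by
      funext x
      simp [hψt]
    rw [hψtsum, map_sum]
    refine Finset.sum_eq_zero fun s _ => ?_
    obtain ⟨R, hR⟩ := hdvd s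
    rw [hR, mul_comm, map_mul, Module.End.mul_apply,
      aeval_Sh_X_pow_sub_one (n s) (ψ s) (hper s), map_zero]
  set L' : ℕ := Q.natDegree with hL'
  have hQmonic : Q.Monic := Polynomial.monic_prod_of_monic _ _
    (fun d _ => Polynomial.cyclotomic.monic d ℤ)
  have hdeg : (L' : ℤ) = L := by
    rw [hL, incl_excl k n hn, hL', hQ,
      Polynomial.natDegree_prod _ _ (fun d _ => Polynomial.cyclotomic_ne_zero d ℤ)]
    push_cast
    refine Finset.sum_congr rfl fun d _ => ?_
    rw [Polynomial.natDegree_cyclotomic]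
  -- the recurrence
  have hrec : ∀ x : ℤ, ∑ j ∈ Finset.range (L' + 1), (Q.coeff j : ℂ) * ψt (x + j) = 0 := by
    intro x
    rw [← aeval_Sh_apply, hann]
    rfl
  -- constant coefficient is a unit
  have hc0 : Q.coeff 0 = 1 ∨ Q.coeff 0 = -1 := by
    rw [← Int.isUnit_iff, Polynomial.coeff_zero_eq_eval_zero, hQ, Polynomial.eval_prod]
    refine Finset.prod_induction _ IsUnit (fun a b ha hb => ha.mul hb) isUnit_one fun d hd => ?_
    have hd1 : 1 ≤ d := by
      simp only [hD, Finset.mem_biUnion, Finset.mem_univ, true_and] at hd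
      obtain ⟨i, hi⟩ := hd
      exact Nat.pos_of_mem_divisors hi
    have hdvd1 : Polynomial.eval 0 (Polynomial.cyclotomic d ℤ)
        ∣ Polynomial.eval 0 (X ^ d - 1 : Polynomial ℤ) :=
      Polynomial.eval_dvd (Polynomial.cyclotomic.dvd_X_pow_sub_one d ℤ)
    have : Polynomial.eval 0 (X ^ d - 1 : Polynomial ℤ) = -1 := by
      simp [zero_pow (by omega : d ≠ 0)]
    rw [this] at hdvd1
    exact isUnit_of_dvd_unit hdvd1 isUnit_one.neg
  -- choice function
  set g : ℤ → ℤ := fun y => if hy : ∃ z : ℤ, ψt y = (z : ℂ) then hy.choose else 0 with hg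
  have hgspec : ∀ y : ℤ, (∃ z : ℤ, ψt y = (z : ℂ)) → ψt y = (g y : ℂ) := by
    intro y hy
    rw [hg]
    simp only [dif_pos hy]
    exact hy.choose_spec
  set IntP : ℤ → Prop := fun y => ∃ z : ℤ, ψt y = (z : ℂ) with hIntP
  suffices hsuff : ∀ x : ℤ, IntP x by
    intro x
    exact hsuff x
  -- degenerate case
  by_cases hL0 : L' = 0
  · have hQ1 : Q = 1 := (hQmonic.natDegree_eq_zero).mp hL0
    intro x
    have : ψt x = 0 := by
      have := congrFun hann x
      rw [hQ1, map_one] at this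
      exact this
    exact ⟨0, by rw [this]; simp⟩
  have hL'pos : 1 ≤ L' := Nat.one_le_iff_ne_zero.mpr hL0
  -- upward step
  have up_step : ∀ x : ℤ, (∀ j : ℕ, j < L' → IntP (x + j)) → IntP (x + L') := by
    intro x hx
    have := hrec x
    rw [Finset.sum_range_succ, hQmonic.coeff_natDegree] at this
    refine ⟨-∑ j ∈ Finset.range L', Q.coeff j * g (x + j), ?_⟩
    have hsum : ∑ j ∈ Finset.range L', (Q.coeff j : ℂ) * ψt (x + j)
        = ∑ j ∈ Finset.range L', (Q.coeff j : ℂ) * (g (x + j) : ℂ) := by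
      refine Finset.sum_congr rfl fun j hj => ?_
      rw [hgspec _ (hx j (Finset.mem_range.mp hj))]
    rw [hsum] at this
    push_cast at this ⊢
    linear_combination this
  -- downward step
  have down_step : ∀ x : ℤ, (∀ j : ℕ, j < L' → IntP (x + 1 + j)) → IntP x := by
    intro x hx
    have hr := hrec x
    rw [Finset.sum_range_succ'] at hr
    simp only [Nat.cast_zero, add_zero] at hr
    have hsum : ∑ j ∈ Finset.range L', (Q.coeff (j + 1) : ℂ) * ψt (x + (j + 1 : ℕ))
        = ∑ j ∈ Finset.range L', (Q.coeff (j + 1) : ℂ) * (g (x + 1 + j) : ℂ) := by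
      refine Finset.sum_congr rfl fun j hj => ?_
      have harg : x + ((j + 1 : ℕ) : ℤ) = x + 1 + j := by push_cast; ring
      rw [harg, hgspec _ (hx j (Finset.mem_range.mp hj))]
    rw [hsum] at hr
    set w : ℤ := -∑ j ∈ Finset.range L', Q.coeff (j + 1) * g (x + 1 + j) with hw
    have hkey : (Q.coeff 0 : ℂ) * ψt x = (w : ℂ) := by
      rw [hw]
      push_cast at hr ⊢
      linear_combination hr
    rcases hc0 with hc | hc
    · exact ⟨w, by rw [hc] at hkey; push_cast at hkey; linear_combination hkey⟩
    · exact ⟨-w, by rw [hc] at hkey; push_cast at hkey ⊢; linear_combination -hkey⟩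
  -- upward induction
  have up : ∀ m : ℕ, IntP (m : ℤ) := by
    intro m
    induction m using Nat.strong_induction_on with
    | _ m ih =>
      by_cases hm : (m : ℤ) < L
      · exact h m (by positivity) hm
      · have hLm : L' ≤ m := by
          rw [← hdeg] at hm
          exact_mod_cast not_lt.mp hm
        have heq : (m : ℤ) = ((m - L' : ℕ) : ℤ) + L' := by
          push_cast [Nat.cast_sub hLm]
          ring
        rw [heq]
        apply up_step
        intro j hj
        have harg : ((m - L' : ℕ) : ℤ) + (j : ℤ) = ((m - L' + j : ℕ) : ℤ) := by push_cast; ring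
        rw [harg]
        exact ih (m - L' + j) (by omega)
  -- downward induction
  have down : ∀ m : ℕ, IntP (-(m : ℤ)) := by
    intro m
    induction m using Nat.strong_induction_on with
    | _ m ih =>
      match m with
      | 0 => simpa using up 0
      | (m' + 1) =>
        apply down_step
        intro j hj
        rcases le_or_gt m' j with hle | hlt
        · have harg : -((m' + 1 : ℕ) : ℤ) + 1 + (j : ℤ) = ((j - m' : ℕ) : ℤ) := by
            push_cast [Nat.cast_sub hle]; ring
          rw [harg]
          exact up (j - m')
        · have harg : -((m' + 1 : ℕ) : ℤ) + 1 + (j : ℤ) = -(((m' - j : ℕ) : ℤ)) := by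
            push_cast [Nat.cast_sub hlt.le]; ring
          rw [harg]
          exact ih (m' - j) (by omega)
  intro x
  rcases le_or_gt 0 x with hx | hx
  · have : x = (x.toNat : ℤ) := (Int.toNat_of_nonneg hx).symm
    rw [this]
    exact up x.toNat
  · have : x = -((-x).toNat : ℤ) := by
      rw [Int.toNat_of_nonneg (by omega)]
      ring
    rw [this]
    exact down (-x).toNat
end

section
/- Let G be an additive abelian group, let c₁,…,c_k ∈ G have finite orders n₁,…,n_k ∈ ℤ⁺, and let P₁,…,P_k ∈ ℤ[x]. If the sum P₁(x)·c₁ + ⋯ + P_k(x)·c_k (where P(x)·c means the ℤ-scalar multiple) vanishes for |S(n₁,…,n_k)| consecutive integers x, then it vanishes for all x ∈ ℤ. -/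
/-!
If `T * M` kills every `c s`, then `x - y ∣ P x - P y` makes `x ↦ M • ∑ s, P s (x) • c s`
periodic with period `T`, so it vanishes identically once it vanishes on `T` consecutive integers.
For a prime `q`, take `T` the largest power of `q` dividing some `n s` (so `T ≤ n s`) and `M` the
product of the prime-to-`q` parts of the `n s`: the value at any `x` is then killed by an integer
prime to `q`, for every prime `q`, hence it is zero.
-/

open Polynomial

lemma eq_zero_of_forall_prime_exists_nsmul_eq_zero {G : Type*} [AddCommGroup G] {g : G}
    (h : ∀ q : ℕ, q.Prime → ∃ M : ℕ, ¬q ∣ M ∧ M • g = 0) : g = 0 := by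
  rw [← AddMonoid.addOrderOf_eq_one_iff, Nat.eq_one_iff_not_exists_prime_dvd]
  intro q hq hqg
  obtain ⟨M, hqM, hMg⟩ := h q hq
  exact hqM (hqg.trans (addOrderOf_dvd_of_nsmul_eq_zero hMg))

section PolynomialCombination

variable {ι G : Type*} [Fintype ι] [AddCommGroup G] (P : ι → ℤ[X]) (c : ι → G)

lemma nsmul_sum_eval_smul_eq_of_modEq {T M : ℕ} (hc : ∀ s, (T * M) • c s = 0) {x y : ℤ}
    (hxy : x ≡ y [ZMOD T]) :
    M • ∑ s, (P s).eval x • c s = M • ∑ s, (P s).eval y • c s := by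
  rw [← sub_eq_zero, ← nsmul_sub, ← Finset.sum_sub_distrib, Finset.smul_sum]
  refine Finset.sum_eq_zero fun s _ => ?_
  have hdvd : ((T * M : ℕ) : ℤ) ∣ M * ((P s).eval x - (P s).eval y) := by
    rw [Nat.cast_mul, mul_comm]
    exact mul_dvd_mul_left _ ((Int.ModEq.dvd hxy.symm).trans (sub_dvd_eval_sub _ _ _))
  obtain ⟨z, hz⟩ := hdvd
  rw [← sub_smul, ← natCast_zsmul, smul_smul, hz, mul_comm, mul_zsmul, natCast_zsmul, hc,
    smul_zero]

lemma nsmul_sum_eval_smul_eq_zero_of_consecutive {T M : ℕ} (hT : T ≠ 0)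
    (hc : ∀ s, (T * M) • c s = 0) (a : ℤ) (h : ∀ r < T, ∑ s, (P s).eval (a + r) • c s = 0)
    (x : ℤ) : M • ∑ s, (P s).eval x • c s = 0 := by
  have hT' : (0 : ℤ) < T := by exact_mod_cast Nat.pos_of_ne_zero hT
  obtain ⟨r, hr⟩ := Int.eq_ofNat_of_zero_le (Int.emod_nonneg (x - a) hT'.ne')
  have hrT : r < T := by have := Int.emod_lt_of_pos (x - a) hT'; omega
  have hx : x ≡ a + r [ZMOD T] := by
    rw [← hr]
    simpa using ((Int.mod_modEq (x - a) T).add_left a).symm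
  rw [nsmul_sum_eval_smul_eq_of_modEq P c hc hx, h r hrT, smul_zero]

theorem sum_eval_smul_eq_zero_of_consecutive (n : ι → ℕ) (hn : ∀ s, n s ≠ 0)
    (hc : ∀ s, n s • c s = 0) (m : ℕ) (hm : ∀ s, n s ≤ m) (a : ℤ)
    (h : ∀ r < m, ∑ s, (P s).eval (a + r) • c s = 0) (x : ℤ) :
    ∑ s, (P s).eval x • c s = 0 := by
  cases isEmpty_or_nonempty ι
  · simp
  refine eq_zero_of_forall_prime_exists_nsmul_eq_zero fun q hq => ?_
  obtain ⟨s₀, hs₀⟩ := Finite.exists_max fun s => (n s).factorization q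
  set T := ordProj[q] (n s₀)
  set M := ∏ s, ordCompl[q] (n s)
  have hqM : ¬q ∣ M := by
    simp only [M, hq.prime.dvd_finsetProd_iff, not_exists, not_and]
    exact fun s _ => Nat.not_dvd_ordCompl hq (hn s)
  have hnTM : ∀ s, n s ∣ T * M := fun s => by
    conv_lhs => rw [← Nat.ordProj_mul_ordCompl_eq_self (n s) q]
    exact mul_dvd_mul (pow_dvd_pow q (hs₀ s)) (Finset.dvd_prod_of_mem _ (Finset.mem_univ s))
  have hTM : ∀ s, (T * M) • c s = 0 := fun s =>
    addOrderOf_dvd_iff_nsmul_eq_zero.mp ((addOrderOf_dvd_of_nsmul_eq_zero (hc s)).trans (hnTM s))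
  have hTm : T ≤ m := (Nat.ordProj_le q (hn s₀)).trans (hm s₀)
  exact ⟨M, hqM, nsmul_sum_eval_smul_eq_zero_of_consecutive P c (Nat.ordProj_pos _ _).ne' hTM a
    (fun r hr => h r (hr.trans_le hTm)) x⟩

end PolynomialCombination

theorem stmt_11 {G : Type*} [AddCommGroup G] (k : ℕ) (n : Fin k → ℕ)
    (hn : ∀ s, 0 < n s) (c : Fin k → G) (hord : ∀ s, addOrderOf (c s) = n s)
    (P : Fin k → Polynomial ℤ)
    (S : Finset ℚ)
    (hS : S = Finset.univ.biUnion fun s =>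
      (Finset.range (n s)).image fun r : ℕ => (r : ℚ) / (n s))
    (a : ℤ)
    (h : ∀ r : ℕ, r < S.card → ∑ s, (P s).eval (a + r) • c s = 0) :
    ∀ x : ℤ, ∑ s, (P s).eval x • c s = 0 := by
  have hnS : ∀ s, n s ≤ S.card := fun s => by
    have hinj : Function.Injective fun r : ℕ => (r : ℚ) / (n s) := fun r r' hr => by
      exact_mod_cast (div_left_inj' (Nat.cast_ne_zero.mpr (hn s).ne')).mp hr
    calc n s = ((Finset.range (n s)).image fun r : ℕ => (r : ℚ) / (n s)).card := by
          rw [Finset.card_image_of_injective _ hinj, Finset.card_range]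
      _ ≤ S.card := by
          rw [hS]
          exact Finset.card_le_card (Finset.subset_biUnion_of_mem
            (fun s => (Finset.range (n s)).image fun r : ℕ => (r : ℚ) / (n s)) (Finset.mem_univ s))
  exact sum_eval_smul_eq_zero_of_consecutive P c n (fun s => (hn s).ne')
    (fun s => hord s ▸ addOrderOf_nsmul_eq_zero (c s)) S.card hnS a h
end

section
/- Let n₁,…,n_k be positive integers and set S = S(n₁,…,n_k). If ψ : ℤ → ℂ is a function such that the values ψ(0), ψ(1), …, ψ(|S|) are linearly independent over ℚ, then ψ cannot be written as ψ₁ + ⋯ + ψ_k where each ψ_s : ℤ → ℂ has period n_s. -/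
/-!
Let `D` be the set of all divisors of the `n s` and `P = ∏_{d ∈ D} Φ_d ∈ ℚ[X]`. Each `X ^ n s - 1`
divides `P`, so `P` evaluated at the shift operator annihilates every `n s`-periodic function, hence
`ψ`. Evaluated at `0` this is a rational linear relation among `ψ 0, …, ψ (deg P)` with leading
coefficient `1`, and `deg P = ∑_{d ∈ D} φ d ≤ |S|` because the reduced fractions in `[0, 1)` with
denominator `d ∈ D` are pairwise distinct elements of `S`.
-/

open Polynomial Finset

section Shift

variable {R M : Type*}

section Semiring

variable [Semiring R] [AddCommMonoid M] [Module R M]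

def shift : Module.End R (ℤ → M) where
  toFun f x := f (x + 1)
  map_add' _ _ := rfl
  map_smul' _ _ := rfl

theorem shift_pow_apply (m : ℕ) (f : ℤ → M) (x : ℤ) :
    ((shift : Module.End R (ℤ → M)) ^ m) f x = f (x + m) := by
  induction m generalizing f x with
  | zero => simp
  | succ m ih =>
    rw [pow_succ, Module.End.mul_apply, ih]
    change f (x + m + 1) = _
    push_cast
    ring_nf

end Semiring

variable [CommRing R] [AddCommGroup M] [Module R M]

theorem aeval_shift_X_pow_sub_one_eq_zero {f : ℤ → M} {n : ℕ} (hf : Function.Periodic f n) :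
    aeval (shift : Module.End R (ℤ → M)) (X ^ n - 1 : R[X]) f = 0 := by
  ext x
  simp [shift_pow_apply, hf x]

theorem aeval_shift_eq_zero_of_dvd {p q : R[X]} (hpq : p ∣ q) {f : ℤ → M}
    (hp : aeval (shift : Module.End R (ℤ → M)) p f = 0) :
    aeval (shift : Module.End R (ℤ → M)) q f = 0 := by
  obtain ⟨r, rfl⟩ := hpq
  rw [mul_comm, map_mul, Module.End.mul_apply, hp, map_zero]

theorem not_linearIndependent_of_aeval_shift_eq_zero {p : R[X]} (hp0 : p ≠ 0) {N : ℕ}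
    (hpN : p.natDegree ≤ N) {f : ℤ → M}
    (hf : aeval (shift : Module.End R (ℤ → M)) p f = 0) :
    ¬ LinearIndependent R (fun r : Fin (N + 1) => f (r : ℕ)) := by
  intro hind
  have hrel : ∑ i : Fin (N + 1), p.coeff i • f (i : ℕ) = 0 := by
    have h0 := congrFun hf 0
    rw [aeval_eq_sum_range' (Nat.lt_succ_of_le hpN), LinearMap.sum_apply, Finset.sum_apply] at h0
    simpa [Fin.sum_univ_eq_sum_range (fun i => p.coeff i • f (i : ℕ)), shift_pow_apply] using h0
  have := Fintype.linearIndependent_iff.mp hind _ hrel ⟨p.natDegree, Nat.lt_succ_of_le hpN⟩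
  exact hp0 (leadingCoeff_eq_zero.mp this)

end Shift

/-- The rationals in `[0, 1)` with denominator exactly `d`. -/
def reducedFractions (d : ℕ) : Finset ℚ :=
  ((range d).filter d.Coprime).image fun r : ℕ => (r : ℚ) / d

theorem den_of_mem_reducedFractions {d : ℕ} {q : ℚ} (hq : q ∈ reducedFractions d) :
    q.den = d := by
  obtain ⟨r, hr, rfl⟩ := mem_image.mp hq
  rw [mem_filter, mem_range] at hr
  have := Rat.den_div_eq_of_coprime (a := r) (b := d) (by omega) (by simpa using hr.2.symm)
  simp only [Int.cast_natCast] at this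
  exact_mod_cast this

theorem card_reducedFractions (d : ℕ) : #(reducedFractions d) = d.totient := by
  rcases eq_or_ne d 0 with rfl | hd
  · simp [reducedFractions]
  rw [reducedFractions, card_image_of_injective _ fun a b hab => ?_, Nat.totient]
  exact_mod_cast (div_left_inj' (by exact_mod_cast hd : (d : ℚ) ≠ 0)).mp hab

theorem reducedFractions_subset {d n : ℕ} (hdn : d ∣ n) (hn : n ≠ 0) :
    reducedFractions d ⊆ (range n).image fun r : ℕ => (r : ℚ) / n := by
  obtain ⟨e, rfl⟩ := hdn
  intro q hq
  obtain ⟨r, hr, rfl⟩ := mem_image.mp hq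
  rw [mem_filter, mem_range] at hr
  have he : e ≠ 0 := right_ne_zero_of_mul hn
  refine mem_image.mpr ⟨r * e, mem_range.mpr (Nat.mul_lt_mul_of_pos_right hr.1 (by omega)), ?_⟩
  push_cast
  exact mul_div_mul_right _ _ (by exact_mod_cast he)

theorem sum_totient_le_card_biUnion_image_div {ι : Type*} (t : Finset ι) (n : ι → ℕ) :
    ∑ d ∈ t.biUnion (fun s => (n s).divisors), d.totient ≤
      #(t.biUnion fun s => (range (n s)).image fun r : ℕ => (r : ℚ) / n s) := by
  calc ∑ d ∈ t.biUnion (fun s => (n s).divisors), d.totient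
      = #((t.biUnion fun s => (n s).divisors).biUnion reducedFractions) := by
        rw [card_biUnion fun x _ y _ hxy => disjoint_left.mpr fun q hx hy =>
          hxy ((den_of_mem_reducedFractions hx).symm.trans (den_of_mem_reducedFractions hy))]
        simp only [card_reducedFractions]
    _ ≤ _ := by
        refine card_le_card fun q hq => ?_
        simp only [mem_biUnion, Nat.mem_divisors] at hq ⊢
        obtain ⟨d, ⟨s, hs, hdn, hn⟩, hq⟩ := hq
        exact ⟨s, hs, reducedFractions_subset hdn hn hq⟩

theorem X_pow_sub_one_dvd_prod_cyclotomic_of_divisors_subset (R : Type*) [CommRing R] {n : ℕ}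
    (hn : 0 < n) {D : Finset ℕ} (hD : n.divisors ⊆ D) :
    (X ^ n - 1 : R[X]) ∣ ∏ d ∈ D, cyclotomic d R := by
  rw [← prod_cyclotomic_eq_X_pow_sub_one hn]
  exact prod_dvd_prod_of_subset _ _ _ hD

theorem stmt_12 (k : ℕ) (n : Fin k → ℕ) (hn : ∀ s, 0 < n s)
    (S : Finset ℚ)
    (hS : S = Finset.univ.biUnion fun s =>
      (Finset.range (n s)).image fun r : ℕ => (r : ℚ) / (n s))
    (ψ : ℤ → ℂ)
    (hind : LinearIndependent ℚ (fun r : Fin (S.card + 1) => ψ (r : ℕ))) :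
    ¬ ∃ ψs : Fin k → ℤ → ℂ,
      (∀ s x, ψs s (x + n s) = ψs s x) ∧ ∀ x : ℤ, ψ x = ∑ s, ψs s x := by
  rintro ⟨ψs, hper, hsum⟩
  set D := univ.biUnion fun s => (n s).divisors
  have hψ : ψ = ∑ s, ψs s := funext fun x => by rw [hsum x, Finset.sum_apply]
  refine not_linearIndependent_of_aeval_shift_eq_zero (p := ∏ d ∈ D, cyclotomic d ℚ)
    (prod_ne_zero_iff.mpr fun d _ => cyclotomic_ne_zero d ℚ) ?_ ?_ hind
  · rw [natDegree_prod _ _ fun d _ => cyclotomic_ne_zero d ℚ, hS]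
    simp only [natDegree_cyclotomic]
    exact sum_totient_le_card_biUnion_image_div univ n
  · rw [hψ, map_sum]
    refine sum_eq_zero fun s _ => aeval_shift_eq_zero_of_dvd ?_
      (aeval_shift_X_pow_sub_one_eq_zero (R := ℚ) (hper s))
    exact X_pow_sub_one_dvd_prod_cyclotomic_of_divisors_subset ℚ (hn s)
      (subset_biUnion_of_mem (fun s => (n s).divisors) (mem_univ s))
end
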